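/- Let p, q, r, s be nonnegative real numbers such that L = pℤ × qℤ × rℤ × sℤ is a lattice of the oscillator group G (a discrete subgroup with compact quotient G/L). Then q > 0, r > 0, there is a positive integer l with p = (π/2)·l, and there is a positive integer k with s = qr/(2k). -/

import Mathlib

open Real

/-- The real 3-dimensional Heisenberg group, as `ℝ³` with the multiplication
`(x,y,z)·(x',y',z') = (x+x', y+y', z+z'+ (xy'-x'y)/2)`. -/
@[ext] structure Heis : Type where
  x : ℝ
  y : ℝ
  z : ℝ

namespace Heis

noncomputable instance : Mul Heis :=
  ⟨fun a b => ⟨a.x + b.x, a.y + b.y, a.z + b.z + (a.x * b.y - b.x * a.y) / 2⟩⟩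

instance : One Heis := ⟨⟨0, 0, 0⟩⟩

instance : Inv Heis := ⟨fun a => ⟨-a.x, -a.y, -a.z⟩⟩

@[simp] lemma mul_x (a b : Heis) : (a * b).x = a.x + b.x := rfl
@[simp] lemma mul_y (a b : Heis) : (a * b).y = a.y + b.y := rfl
@[simp] lemma mul_z (a b : Heis) :
    (a * b).z = a.z + b.z + (a.x * b.y - b.x * a.y) / 2 := rfl
@[simp] lemma one_x : (1 : Heis).x = 0 := rfl
@[simp] lemma one_y : (1 : Heis).y = 0 := rfl
@[simp] lemma one_z : (1 : Heis).z = 0 := rfl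
@[simp] lemma inv_x (a : Heis) : a⁻¹.x = -a.x := rfl
@[simp] lemma inv_y (a : Heis) : a⁻¹.y = -a.y := rfl
@[simp] lemma inv_z (a : Heis) : a⁻¹.z = -a.z := rfl

noncomputable instance : Group Heis where
  mul_assoc a b c := by ext <;> simp <;> ring
  one_mul a := by ext <;> simp
  mul_one a := by ext <;> simp
  inv_mul_cancel a := by ext <;> simp

end Heis

/-- The rotation action `α(t)` of `ℝ` on the Heisenberg group. -/
noncomputable def alphaMap (t : ℝ) (v : Heis) : Heis :=
  ⟨v.x * cos t + v.y * sin t, -v.x * sin t + v.y * cos t, v.z⟩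

@[simp] lemma alphaMap_x (t : ℝ) (v : Heis) :
    (alphaMap t v).x = v.x * cos t + v.y * sin t := rfl
@[simp] lemma alphaMap_y (t : ℝ) (v : Heis) :
    (alphaMap t v).y = -v.x * sin t + v.y * cos t := rfl
@[simp] lemma alphaMap_z (t : ℝ) (v : Heis) : (alphaMap t v).z = v.z := rfl

/-- The oscillator group `G = ℝ ⋉_α H₃(ℝ)`. -/
@[ext] structure Osc : Type where
  t : ℝ
  v : Heis

namespace Osc

noncomputable instance : Mul Osc := ⟨fun a b => ⟨a.t + b.t, a.v * alphaMap a.t b.v⟩⟩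
instance : One Osc := ⟨⟨0, 1⟩⟩
noncomputable instance : Inv Osc := ⟨fun a => ⟨-a.t, alphaMap (-a.t) a.v⁻¹⟩⟩

@[simp] lemma mul_t (a b : Osc) : (a * b).t = a.t + b.t := rfl
@[simp] lemma mul_v (a b : Osc) : (a * b).v = a.v * alphaMap a.t b.v := rfl
@[simp] lemma one_t : (1 : Osc).t = 0 := rfl
@[simp] lemma one_v : (1 : Osc).v = 1 := rfl
@[simp] lemma inv_t (a : Osc) : a⁻¹.t = -a.t := rfl
@[simp] lemma inv_v (a : Osc) : a⁻¹.v = alphaMap (-a.t) a.v⁻¹ := rfl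

lemma alphaMap_one (t : ℝ) : alphaMap t (1 : Heis) = 1 := by
  ext <;> simp

lemma alphaMap_mul (t : ℝ) (v w : Heis) :
    alphaMap t (v * w) = alphaMap t v * alphaMap t w := by
  ext
  · simp; ring
  · simp; ring
  · simp
    linear_combination (w.x * v.y - v.x * w.y) * (sin_sq_add_cos_sq t)

lemma alphaMap_add (s t : ℝ) (v : Heis) :
    alphaMap (s + t) v = alphaMap s (alphaMap t v) := by
  ext <;> simp [cos_add, sin_add] <;> ring

lemma alphaMap_zero (v : Heis) : alphaMap 0 v = v := by
  ext <;> simp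

noncomputable instance : Group Osc where
  mul_assoc a b c := by
    refine Osc.ext (by simp; ring) ?_
    simp only [Osc.mul_v, Osc.mul_t, alphaMap_mul, ← alphaMap_add]
    rw [mul_assoc]
  one_mul a := Osc.ext (by simp) (by simp [alphaMap_zero])
  mul_one a := Osc.ext (by simp) (by simp [alphaMap_one])
  inv_mul_cancel a := by
    refine Osc.ext (by simp) ?_
    simp only [Osc.mul_v, Osc.inv_v, Osc.inv_t, Osc.one_v]
    rw [← alphaMap_mul, inv_mul_cancel, alphaMap_one]

end Osc

/-- `Heis` carries the standard topology of `ℝ³`. -/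
noncomputable instance : TopologicalSpace Heis :=
  TopologicalSpace.induced (fun v => (v.x, v.y, v.z)) inferInstance

/-- `Osc` carries the standard topology of `ℝ⁴`. -/
noncomputable instance : TopologicalSpace Osc :=
  TopologicalSpace.induced (fun g => (g.t, g.v.x, g.v.y, g.v.z)) inferInstance

lemma cos_sin_int (n : ℤ) :
    ∃ a b : ℤ, cos (π / 2 * n) = a ∧ sin (π / 2 * n) = b := by
  induction n using Int.induction_on with
  | zero => exact ⟨1, 0, by simp, by simp⟩
  | succ n ih =>
    obtain ⟨a, b, ha, hb⟩ := ih
    have h : (((n : ℤ) + 1 : ℤ) : ℝ) = ((n : ℤ) : ℝ) + 1 := by push_cast; ring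
    refine ⟨-b, a, ?_, ?_⟩
    · rw [h, mul_add, mul_one, cos_add, ha, hb]
      push_cast
      simp
    · rw [h, mul_add, mul_one, sin_add, ha, hb]
      simp
  | pred n ih =>
    obtain ⟨a, b, ha, hb⟩ := ih
    have h : ((-(n : ℤ) - 1 : ℤ) : ℝ) = ((-(n : ℤ) : ℤ) : ℝ) - 1 := by push_cast; ring
    refine ⟨b, -a, ?_, ?_⟩
    · rw [h, mul_sub, mul_one, cos_sub, ha, hb]
      simp
    · rw [h, mul_sub, mul_one, sin_sub, ha, hb]
      push_cast
      simp

lemma cos_sin_int' (t : ℝ) (h : ∃ j : ℤ, t = π / 2 * j) :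
    ∃ a b : ℤ, cos t = a ∧ sin t = b := by
  obtain ⟨j, rfl⟩ := h
  exact cos_sin_int j

/-- The lattice `θℤ ⋉ Γ_k` in the oscillator group, for `θ` an integer multiple of `π/2`. -/
noncomputable def LamTheta (k : ℕ+) (θ : ℝ) (m : ℤ) (hθ : θ = π / 2 * m) : Subgroup Osc where
  carrier := {g | (∃ n : ℤ, g.t = θ * n) ∧ (∃ a : ℤ, g.v.x = a) ∧ (∃ b : ℤ, g.v.y = b) ∧
    (∃ c : ℤ, g.v.z = (c : ℝ) / (2 * ((k : ℕ) : ℝ)))}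
  one_mem' := ⟨⟨0, by simp⟩, ⟨0, by simp⟩, ⟨0, by simp⟩, ⟨0, by simp⟩⟩
  mul_mem' := by
    rintro g h ⟨⟨n₁, hn₁⟩, ⟨a₁, ha₁⟩, ⟨b₁, hb₁⟩, ⟨c₁, hc₁⟩⟩
      ⟨⟨n₂, hn₂⟩, ⟨a₂, ha₂⟩, ⟨b₂, hb₂⟩, ⟨c₂, hc₂⟩⟩
    obtain ⟨A, B, hA, hB⟩ := cos_sin_int' g.t ⟨m * n₁, by rw [hn₁, hθ]; push_cast; ring⟩
    have hk : ((k : ℕ) : ℝ) ≠ 0 := by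
      exact_mod_cast k.ne_zero
    refine ⟨⟨n₁ + n₂, ?_⟩, ⟨a₁ + (a₂ * A + b₂ * B), ?_⟩, ⟨b₁ + (-(a₂ * B) + b₂ * A), ?_⟩,
      ⟨c₁ + c₂ + (k : ℕ) * (a₁ * (-(a₂ * B) + b₂ * A) - (a₂ * A + b₂ * B) * b₁), ?_⟩⟩
    · simp only [Osc.mul_t, hn₁, hn₂]; push_cast; ring
    · simp only [Osc.mul_v, Heis.mul_x, alphaMap_x, ha₁, ha₂, hb₂, hA, hB]; push_cast; ring
    · simp only [Osc.mul_v, Heis.mul_y, alphaMap_y, hb₁, ha₂, hb₂, hA, hB]; push_cast; ring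
    · simp only [Osc.mul_v, Heis.mul_z, alphaMap_x, alphaMap_y, alphaMap_z,
        ha₁, hb₁, ha₂, hb₂, hc₁, hc₂, hA, hB]
      field_simp
      push_cast; ring
  inv_mem' := by
    rintro g ⟨⟨n₁, hn₁⟩, ⟨a₁, ha₁⟩, ⟨b₁, hb₁⟩, ⟨c₁, hc₁⟩⟩
    obtain ⟨A, B, hA, hB⟩ := cos_sin_int' g.t ⟨m * n₁, by rw [hn₁, hθ]; push_cast; ring⟩
    refine ⟨⟨-n₁, ?_⟩, ⟨-(a₁ * A) + b₁ * B, ?_⟩, ⟨-(a₁ * B) - b₁ * A, ?_⟩, ⟨-c₁, ?_⟩⟩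
    · simp only [Osc.inv_t, hn₁]; push_cast; ring
    · simp only [Osc.inv_v, alphaMap_x, Heis.inv_x, Heis.inv_y, cos_neg, sin_neg,
        ha₁, hb₁, hA, hB]
      push_cast; ring
    · simp only [Osc.inv_v, alphaMap_y, Heis.inv_x, Heis.inv_y, cos_neg, sin_neg,
        ha₁, hb₁, hA, hB]
      push_cast; ring
    · simp only [Osc.inv_v, alphaMap_z, Heis.inv_z, hc₁]
      push_cast; ring

/-- The lattice `Λ_{k,0} = 2πℤ × Γ_k`. -/
noncomputable def Lam0 (k : ℕ+) : Subgroup Osc :=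
  LamTheta k (2 * π) 4 (by push_cast; ring)

/-- The lattice `Λ_{k,π} = πℤ × Γ_k`. -/
noncomputable def LamPi (k : ℕ+) : Subgroup Osc :=
  LamTheta k π 2 (by push_cast; ring)

/-- The lattice `Λ_{k,π/2} = (π/2)ℤ × Γ_k`. -/
noncomputable def LamPi2 (k : ℕ+) : Subgroup Osc :=
  LamTheta k (π / 2) 1 (by push_cast; ring)

/-- The lattice `Γ_k = ℤ × ℤ × (1/(2k))ℤ` in the Heisenberg group. -/
noncomputable def Gamma (k : ℕ+) : Subgroup Heis where
  carrier := {v | (∃ a : ℤ, v.x = a) ∧ (∃ b : ℤ, v.y = b) ∧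
    (∃ c : ℤ, v.z = (c : ℝ) / (2 * ((k : ℕ) : ℝ)))}
  one_mem' := ⟨⟨0, by simp⟩, ⟨0, by simp⟩, ⟨0, by simp⟩⟩
  mul_mem' := by
    rintro v w ⟨⟨a₁, ha₁⟩, ⟨b₁, hb₁⟩, ⟨c₁, hc₁⟩⟩ ⟨⟨a₂, ha₂⟩, ⟨b₂, hb₂⟩, ⟨c₂, hc₂⟩⟩
    have hk : ((k : ℕ) : ℝ) ≠ 0 := by exact_mod_cast k.ne_zero
    refine ⟨⟨a₁ + a₂, ?_⟩, ⟨b₁ + b₂, ?_⟩, ⟨c₁ + c₂ + (k : ℕ) * (a₁ * b₂ - a₂ * b₁), ?_⟩⟩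
    · simp [ha₁, ha₂]
    · simp [hb₁, hb₂]
    · simp only [Heis.mul_z, ha₁, hb₁, ha₂, hb₂, hc₁, hc₂]
      field_simp
      push_cast; ring
  inv_mem' := by
    rintro v ⟨⟨a₁, ha₁⟩, ⟨b₁, hb₁⟩, ⟨c₁, hc₁⟩⟩
    refine ⟨⟨-a₁, by simp [ha₁]⟩, ⟨-b₁, by simp [hb₁]⟩, ⟨-c₁, ?_⟩⟩
    simp only [Heis.inv_z, hc₁]
    push_cast
    ring

/-- The subset `pℤ × qℤ × rℤ × sℤ` of the oscillator group. -/
def prodSet (p q r s : ℝ) : Set Osc :=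
  {g | (∃ n : ℤ, g.t = p * n) ∧ (∃ n : ℤ, g.v.x = q * n) ∧
    (∃ n : ℤ, g.v.y = r * n) ∧ (∃ n : ℤ, g.v.z = s * n)}


/-! A continuous function on `Osc` that is invariant under right multiplication by `S` factors
through the compact space `Osc ⧸ S`, hence is bounded. If `p = 0` the coordinate `t` is such a
function, and if `q = r = 0` the coordinate `x` is. If only one of `q`, `r` vanishes, closure of
`S` under multiplication forces `sin p = 0`; then `S` translates `(x, y)` along a line up to sign,
and the distance to that line is an unbounded invariant. Once `q, r > 0`, the product
`(p, 0, 0, 0) · (0, q, 0, 0) = (p, q cos p, -q sin p, 0)` lies in `S`, so `cos p ∈ ℤ` and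
`sin 2p = 0`; and `(0, q, 0, 0) · (0, 0, r, 0) = (0, q, r, qr/2)` gives `qr/2 ∈ sℤ`. -/

theorem not_compactSpace_quotient_of_invariant {G : Type*} [Group G] [TopologicalSpace G]
    (S : Subgroup G) {f : G → ℝ} (hf : Continuous f) (hfS : ∀ g, ∀ s ∈ S, f (g * s) = f g)
    (hunb : ∀ a, ∃ g, a ≤ f g) : ¬ CompactSpace (G ⧸ S) := by
  intro _
  let F : G ⧸ S → ℝ := Quotient.lift f fun a b h => by
    simpa using (hfS a _ (QuotientGroup.leftRel_apply.mp h)).symm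
  obtain ⟨C, hC⟩ := (isCompact_range (hf.quotient_lift _ : Continuous F)).bddAbove
  obtain ⟨g, hg⟩ := hunb (C + 1)
  have : f g ≤ C := hC ⟨(g : G ⧸ S), rfl⟩
  linarith

theorem Real.sin_mul_intCast_eq_zero {x : ℝ} (hx : sin x = 0) (n : ℤ) : sin (x * n) = 0 := by
  obtain ⟨m, rfl⟩ := sin_eq_zero_iff.mp hx
  simpa [mul_right_comm] using sin_int_mul_pi (m * n)

theorem Real.sin_two_mul_eq_zero_of_cos_eq_intCast {x : ℝ} {n : ℤ} (hx : cos x = n) :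
    sin (2 * x) = 0 := by
  have hn : -1 ≤ n ∧ n ≤ 1 := by exact_mod_cast abs_le.mp (hx ▸ abs_cos_le_one x)
  rw [sin_two_mul, hx]
  rcases (by omega : n = -1 ∨ n = 0 ∨ n = 1) with rfl | rfl | rfl
  · simp [sin_eq_zero_iff_cos_eq.mpr (.inr (by simpa using hx))]
  · simp
  · simp [sin_eq_zero_iff_cos_eq.mpr (.inl (by simpa using hx))]

theorem exists_pnat_cast_eq {j : ℤ} (hj : 0 < j) : ∃ l : ℕ+, ((l : ℕ) : ℝ) = j :=
  ⟨⟨j.toNat, by omega⟩, by exact_mod_cast Int.toNat_of_nonneg hj.le⟩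

namespace Osc

lemma continuous_coords : Continuous (fun g : Osc => (g.t, g.v.x, g.v.y, g.v.z)) :=
  continuous_induced_dom

@[fun_prop] lemma continuous_t : Continuous (fun g : Osc => g.t) := continuous_coords.fst
@[fun_prop] lemma continuous_x : Continuous (fun g : Osc => g.v.x) := continuous_coords.snd.fst
@[fun_prop] lemma continuous_y : Continuous (fun g : Osc => g.v.y) :=
  continuous_coords.snd.snd.fst

theorem not_compactSpace_quotient_of_t_eq_zero (S : Subgroup Osc) (hS : ∀ s ∈ S, s.t = 0) :
    ¬ CompactSpace (Osc ⧸ S) :=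
  not_compactSpace_quotient_of_invariant S continuous_t (by simp +contextual [hS])
    fun a => ⟨⟨a, 1⟩, le_rfl⟩

theorem not_compactSpace_quotient_of_x_eq_zero_of_y_eq_zero (S : Subgroup Osc)
    (hS : ∀ s ∈ S, s.v.x = 0 ∧ s.v.y = 0) : ¬ CompactSpace (Osc ⧸ S) :=
  not_compactSpace_quotient_of_invariant S continuous_x (by simp +contextual [hS])
    fun a => ⟨⟨0, ⟨a, 0, 0⟩⟩, le_rfl⟩

/-- Right multiplication by `s ∈ S` shifts `t` by a multiple of `π` and moves `(x, y)` along the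
line spanned by `(sin (t + θ), cos (t + θ))`, so the distance `|x cos (t + θ) - y sin (t + θ)|`
to that line is invariant. -/
theorem not_compactSpace_quotient_of_sin_eq_zero (S : Subgroup Osc) (θ : ℝ)
    (hS : ∀ s ∈ S, s.v.x * cos θ = s.v.y * sin θ ∧ sin s.t = 0) : ¬ CompactSpace (Osc ⧸ S) := by
  refine not_compactSpace_quotient_of_invariant S
    (f := fun g => |g.v.x * cos (g.t + θ) - g.v.y * sin (g.t + θ)|)
    (by fun_prop) (fun g s hs => ?_) fun a => ⟨⟨-θ, ⟨a, 0, 0⟩⟩, by simpa using le_abs_self a⟩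
  obtain ⟨hline, hsin⟩ := hS s hs
  have hmul : (g * s).v.x * cos ((g * s).t + θ) - (g * s).v.y * sin ((g * s).t + θ) =
      cos s.t * (g.v.x * cos (g.t + θ) - g.v.y * sin (g.t + θ)) := by
    simp only [mul_t, mul_v, Heis.mul_x, Heis.mul_y, alphaMap_x, alphaMap_y,
      add_right_comm g.t s.t θ, cos_add, sin_add, hsin]
    linear_combination
      cos s.t * (hline + (s.v.x * cos θ - s.v.y * sin θ) * sin_sq_add_cos_sq g.t)
  have hcos : |cos s.t| = 1 := by
    rcases sin_eq_zero_iff_cos_eq.mp hsin with hc | hc <;> simp [hc]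
  simp only [hmul, abs_mul, hcos, one_mul]

end Osc

namespace prodSet

variable {p q r s : ℝ} {S : Subgroup Osc}

theorem mem_of_mem (hS : (S : Set Osc) = prodSet p q r s) {g : Osc} (hg : g ∈ S) :
    g ∈ prodSet p q r s :=
  hS ▸ hg

theorem mk_mem (hS : (S : Set Osc) = prodSet p q r s) (a b c d : ℤ) :
    (⟨p * a, ⟨q * b, r * c, s * d⟩⟩ : Osc) ∈ S := by
  rw [← SetLike.mem_coe, hS]
  exact ⟨⟨a, rfl⟩, ⟨b, rfl⟩, ⟨c, rfl⟩, ⟨d, rfl⟩⟩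

theorem alphaMap_q_mem (hS : (S : Set Osc) = prodSet p q r s) :
    (⟨p, ⟨q * cos p, -(q * sin p), 0⟩⟩ : Osc) ∈ S := by
  convert S.mul_mem (mk_mem hS 1 0 0 0) (mk_mem hS 0 1 0 0) using 1
  ext <;> simp

theorem alphaMap_r_mem (hS : (S : Set Osc) = prodSet p q r s) :
    (⟨p, ⟨r * sin p, r * cos p, 0⟩⟩ : Osc) ∈ S := by
  convert S.mul_mem (mk_mem hS 1 0 0 0) (mk_mem hS 0 0 1 0) using 1
  ext <;> simp

theorem mk_q_r_mem (hS : (S : Set Osc) = prodSet p q r s) :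
    (⟨0, ⟨q, r, q * r / 2⟩⟩ : Osc) ∈ S := by
  convert S.mul_mem (mk_mem hS 0 1 0 0) (mk_mem hS 0 0 1 0) using 1
  ext <;> simp

theorem sin_t_eq_zero (hS : (S : Set Osc) = prodSet p q r s) (hp : sin p = 0) {g : Osc}
    (hg : g ∈ S) : sin g.t = 0 := by
  obtain ⟨⟨n, hn⟩, -⟩ := mem_of_mem hS hg
  rw [hn, sin_mul_intCast_eq_zero hp]

theorem exists_s_eq (hS : (S : Set Osc) = prodSet p q r s) (hq : 0 < q) (hr : 0 < r)
    (hs : 0 ≤ s) : ∃ k : ℕ+, s = q * r / (2 * ((k : ℕ) : ℝ)) := by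
  obtain ⟨-, -, -, ⟨m, hm⟩⟩ := mem_of_mem hS (mk_q_r_mem hS)
  have hm' : q * r / 2 = s * m := hm
  have hm_pos : 0 < m := by
    have : 0 < s * m := hm' ▸ by positivity
    exact_mod_cast pos_of_mul_pos_right this hs
  obtain ⟨k, hk⟩ := exists_pnat_cast_eq hm_pos
  refine ⟨k, ?_⟩
  rw [hk, eq_div_iff (by positivity)]
  linarith

variable [CompactSpace (Osc ⧸ S)]

theorem p_ne_zero (hS : (S : Set Osc) = prodSet p q r s) : p ≠ 0 := by
  rintro rfl
  refine Osc.not_compactSpace_quotient_of_t_eq_zero S (fun g hg => ?_) ‹_›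
  obtain ⟨⟨n, hn⟩, -⟩ := mem_of_mem hS hg
  simpa using hn

theorem q_pos (hS : (S : Set Osc) = prodSet p q r s) (hq : 0 ≤ q) : 0 < q := by
  refine hq.lt_of_ne' fun hq0 => ?_
  have hx : ∀ g ∈ S, g.v.x = 0 := fun g hg => by
    obtain ⟨-, ⟨n, hn⟩, -⟩ := mem_of_mem hS hg
    simpa [hq0] using hn
  by_cases hr0 : r = 0
  · refine Osc.not_compactSpace_quotient_of_x_eq_zero_of_y_eq_zero S
      (fun g hg => ⟨hx g hg, ?_⟩) ‹_›
    obtain ⟨-, -, ⟨n, hn⟩, -⟩ := mem_of_mem hS hg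
    simpa [hr0] using hn
  · have hp : sin p = 0 := by
      simpa [hr0] using hx _ (alphaMap_r_mem hS)
    exact Osc.not_compactSpace_quotient_of_sin_eq_zero S 0
      (fun g hg => ⟨by simp [hx g hg], sin_t_eq_zero hS hp hg⟩) ‹_›

theorem r_pos (hS : (S : Set Osc) = prodSet p q r s) (hq : 0 < q) (hr : 0 ≤ r) : 0 < r := by
  refine hr.lt_of_ne' fun hr0 => ?_
  have hy : ∀ g ∈ S, g.v.y = 0 := fun g hg => by
    obtain ⟨-, -, ⟨n, hn⟩, -⟩ := mem_of_mem hS hg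
    simpa [hr0] using hn
  have hp : sin p = 0 := by
    simpa [hq.ne'] using hy _ (alphaMap_q_mem hS)
  exact Osc.not_compactSpace_quotient_of_sin_eq_zero S (π / 2)
    (fun g hg => ⟨by simp [hy g hg], sin_t_eq_zero hS hp hg⟩) ‹_›

theorem exists_p_eq (hS : (S : Set Osc) = prodSet p q r s) (hp : 0 ≤ p) (hq : 0 < q) :
    ∃ l : ℕ+, p = π / 2 * ((l : ℕ) : ℝ) := by
  obtain ⟨-, ⟨n, hn⟩, -⟩ := mem_of_mem hS (alphaMap_q_mem hS)
  have hcos : cos p = n := mul_left_cancel₀ hq.ne' hn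
  obtain ⟨j, hj⟩ := sin_eq_zero_iff.mp (sin_two_mul_eq_zero_of_cos_eq_intCast hcos)
  have hj_pos : 0 < j := by
    have : 0 < (j : ℝ) * π := by rw [hj]; linarith [hp.lt_of_ne' (p_ne_zero hS)]
    exact_mod_cast pos_of_mul_pos_left this pi_pos.le
  obtain ⟨l, hl⟩ := exists_pnat_cast_eq hj_pos
  refine ⟨l, ?_⟩
  rw [hl]
  linarith

end prodSet

theorem statement11_general (p q r s : ℝ) (hp : 0 ≤ p) (hq : 0 ≤ q) (hr : 0 ≤ r) (hs : 0 ≤ s)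
    (S : Subgroup Osc) (hS : (S : Set Osc) = prodSet p q r s)
    (hcpt : CompactSpace (Osc ⧸ S)) :
    0 < q ∧ 0 < r ∧ (∃ l : ℕ+, p = π / 2 * ((l : ℕ) : ℝ)) ∧
      ∃ k : ℕ+, s = q * r / (2 * ((k : ℕ) : ℝ)) := by
  have hq' := prodSet.q_pos hS hq
  have hr' := prodSet.r_pos hS hq' hr
  exact ⟨hq', hr', prodSet.exists_p_eq hS hp hq', prodSet.exists_s_eq hS hq' hr' hs⟩

/-- If `p, q, r, s ≥ 0` and `L = pℤ × qℤ × rℤ × sℤ` is a lattice of the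
oscillator group, then `q > 0`, `r > 0`, `p = (π/2)l` for a positive integer `l`, and
`s = qr/(2k)` for a positive integer `k`. -/
theorem statement11 (p q r s : ℝ) (hp : 0 ≤ p) (hq : 0 ≤ q) (hr : 0 ≤ r) (hs : 0 ≤ s)
    (S : Subgroup Osc) (hS : (S : Set Osc) = prodSet p q r s)
    (hdisc : DiscreteTopology S) (hcpt : CompactSpace (Osc ⧸ S)) :
    0 < q ∧ 0 < r ∧ (∃ l : ℕ+, p = π / 2 * ((l : ℕ) : ℝ)) ∧
      ∃ k : ℕ+, s = q * r / (2 * ((k : ℕ) : ℝ)) :=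
  statement11_general p q r s hp hq hr hs S hS hcpt
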